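/- Let n be even and g(x_1,...,x_n) = (⋀_{i=1}^{n/2} x_i) ∨ (⋀_{i=n/2+1}^{n} x_i). For every variable order π, the function g has at least 2^{n/2+1} − 3 switches with respect to π. -/

import Mathlib

/-!
Let `Q` be the half of the variables that the order `π` places on the least significant bit, and
`P` the other half, so `|P| ≥ n/2`. For every proper subset `S ⊊ P`, the number whose set bits are
`Q ∪ S` is a rising edge of `g`: it satisfies the `Q`-conjunction, while its predecessor clears the
lowest bit and satisfies neither conjunction. Between any two of these `2^|P| - 1` rising edges
lies a falling edge, so `g` has at least `2 (2^|P| - 1) - 1 = 2^(|P|+1) - 3` switches.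
-/

/-- The number encoding an assignment `a` with respect to variable order `π`:
the variable in position `i` of `π` gets bit-weight `2^(n-1-i)`, so earlier
positions are more significant. -/
def numOf {n : ℕ} (π : Equiv.Perm (Fin n)) (a : Fin n → Bool) : ℕ :=
  ∑ i : Fin n, if a (π i) then 2 ^ (n - 1 - (i : ℕ)) else 0

/-- The assignment encoded by the number `b` with respect to variable order `π`. -/
def asgOf {n : ℕ} (π : Equiv.Perm (Fin n)) (b : ℕ) : Fin n → Bool :=
  fun x => b.testBit (n - 1 - ((π.symm x : Fin n) : ℕ))

/-- The set of switches of a Boolean function `f` on `n` variables with respect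
to the variable order `π`: all `b ∈ {1, …, 2^n - 1}` where the value changes. -/
def switches (n : ℕ) (π : Equiv.Perm (Fin n)) (f : (Fin n → Bool) → Bool) : Finset ℕ :=
  (Finset.Ico 1 (2 ^ n)).filter fun b => f (asgOf π b) ≠ f (asgOf π (b - 1))

/-- `g = (⋀_{j=1}^{n/2} xⱼ) ∨ (⋀_{j=n/2+1}^{n} xⱼ)`. -/
def g (n : ℕ) : (Fin n → Bool) → Bool := fun a =>
  (decide (∀ i : Fin n, (i : ℕ) < n / 2 → a i = true)) ||
  (decide (∀ i : Fin n, n / 2 ≤ (i : ℕ) → a i = true))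

open Finset

def switchesBelow (f : ℕ → Bool) (N : ℕ) : Finset ℕ := {b ∈ Ico 1 N | f b ≠ f (b - 1)}

section SwitchesBelow

variable {f : ℕ → Bool}

lemma mem_switchesBelow {N b : ℕ} :
    b ∈ switchesBelow f N ↔ (1 ≤ b ∧ b < N) ∧ f b ≠ f (b - 1) := by
  rw [switchesBelow, mem_filter, mem_Ico]

lemma switchesBelow_mono {M N : ℕ} (h : M ≤ N) : switchesBelow f M ⊆ switchesBelow f N :=
  filter_subset_filter _ (Ico_subset_Ico_right h)

lemma exists_mem_switchesBelow_of_ne {a c N : ℕ} (hac : a < c) (hcN : c < N) (h : f a ≠ f c) :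
    ∃ s ∈ switchesBelow f N, a < s ∧ s ≤ c := by
  induction c, hac using Nat.le_induction with
  | base => exact ⟨a + 1, mem_switchesBelow.2 ⟨by omega, by simpa using h.symm⟩, by omega, le_rfl⟩
  | succ c hac ih =>
    by_cases hc : f c = f (c + 1)
    · obtain ⟨s, hs, has, hsc⟩ := ih (by omega) (hc ▸ h)
      exact ⟨s, hs, has, by omega⟩
    · exact ⟨c + 1, mem_switchesBelow.2 ⟨by omega, by simpa using Ne.symm hc⟩, by omega, le_rfl⟩

/-- Between two consecutive rising edges of `f` there is a falling one. -/
lemma two_mul_card_sub_one_le_card_switchesBelow {N : ℕ} {U : Finset ℕ}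
    (hU : ∀ u ∈ U, (1 ≤ u ∧ u < N) ∧ f (u - 1) = false ∧ f u = true) :
    2 * #U - 1 ≤ #(switchesBelow f N) := by
  induction U using Finset.induction_on_max generalizing N with
  | empty => simp
  | insert a U haU ih =>
    obtain ⟨haN, hfa', hfa⟩ := hU a (mem_insert_self a U)
    have ha : a ∈ switchesBelow f N := mem_switchesBelow.2 ⟨haN, by simp [hfa, hfa']⟩
    rw [card_insert_of_notMem fun h => (haU a h).false]
    rcases U.eq_empty_or_nonempty with rfl | hne
    · simpa using card_pos.2 ⟨a, ha⟩
    set u := U.max' hne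
    have hfu : f u = true := (hU u (mem_insert_of_mem (U.max'_mem hne))).2.2
    have hua : u < a - 1 := by
      have : u ≠ a - 1 := fun h => by simp [← h, hfu] at hfa'
      have := haU u (U.max'_mem hne)
      omega
    obtain ⟨s, hs, hus, hsa⟩ :=
      exists_mem_switchesBelow_of_ne (N := N) hua (by omega) (by simp [hfu, hfa'] : f u ≠ f (a - 1))
    have hIH : 2 * #U - 1 ≤ #(switchesBelow f (u + 1)) := ih fun v hv => by
      obtain ⟨hvN, hfv⟩ := hU v (mem_insert_of_mem hv)
      exact ⟨⟨hvN.1, Nat.lt_succ_of_le (U.le_max' v hv)⟩, hfv⟩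
    have hlow : ∀ x ∈ switchesBelow f (u + 1), x ≤ u := fun x hx => by
      have := mem_switchesBelow.1 hx; omega
    have hsub : insert a (insert s (switchesBelow f (u + 1))) ⊆ switchesBelow f N :=
      insert_subset ha (insert_subset hs (switchesBelow_mono (by omega)))
    have hcard := card_le_card hsub
    rw [card_insert_of_notMem, card_insert_of_notMem] at hcard
    · have := hne.card_pos; omega
    · exact fun h => by have := hlow s h; omega
    · simp only [mem_insert, not_or]
      exact ⟨by omega, fun h => by have := hlow a h; omega⟩

end SwitchesBelow

lemma testBit_sum_two_pow (s : Finset ℕ) (j : ℕ) :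
    (∑ i ∈ s, 2 ^ i).testBit j = true ↔ j ∈ s := by
  rw [← Nat.mem_bitIndices, ← List.mem_toFinset, toFinset_bitIndices_sum_two_pow]

section TwoBlocks

variable {f : ℕ → Bool} {P Q : Finset ℕ}

def IsOrOfAnds (f : ℕ → Bool) (P Q : Finset ℕ) : Prop :=
  ∀ b, f b = true ↔ (∀ k ∈ P, b.testBit k = true) ∨ (∀ k ∈ Q, b.testBit k = true)

lemma IsOrOfAnds.symm (hf : IsOrOfAnds f P Q) : IsOrOfAnds f Q P := fun b => (hf b).trans or_comm

/-- Clearing bit `0` falsifies the `Q`-conjunction, and the `P`-conjunction fails at a bit of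
`P \ S`. -/
lemma IsOrOfAnds.rising_sum_two_pow_union (hf : IsOrOfAnds f P Q) (hPQ : Disjoint P Q)
    (hQ : 0 ∈ Q) {S : Finset ℕ} (hSP : S ⊂ P) :
    f (∑ i ∈ Q ∪ S, 2 ^ i - 1) = false ∧ f (∑ i ∈ Q ∪ S, 2 ^ i) = true := by
  obtain ⟨w, hwP, hwS⟩ := exists_of_ssubset hSP
  have hwQS : w ∉ Q ∪ S := by simp [hwS, disjoint_left.mp hPQ hwP]
  have hpred : ∑ i ∈ Q ∪ S, 2 ^ i - 1 = ∑ i ∈ (Q ∪ S).erase 0, 2 ^ i := by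
    rw [← add_sum_erase _ _ (mem_union_left S hQ), pow_zero, Nat.add_sub_cancel_left]
  refine ⟨?_, (hf _).2 (Or.inr fun k hk => (testBit_sum_two_pow _ _).2 (mem_union_left S hk))⟩
  rw [hpred, ← Bool.not_eq_true, hf]
  simp only [testBit_sum_two_pow]
  rintro (hP | hQ')
  · exact hwQS (mem_of_mem_erase (hP w hwP))
  · exact notMem_erase 0 _ (hQ' 0 hQ)

lemma IsOrOfAnds.pow_card_succ_sub_three_le (hf : IsOrOfAnds f P Q) (hPQ : Disjoint P Q)
    (hQ : 0 ∈ Q) {n : ℕ} (hn : P ∪ Q ⊆ range n) :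
    2 ^ (#P + 1) - 3 ≤ #(switchesBelow f (2 ^ n)) := by
  have hinj : Set.InjOn (fun S => ∑ i ∈ Q ∪ S, 2 ^ i) (P.powerset.erase P) := by
    intro S₁ hS₁ S₂ hS₂ h
    have hQS : ∀ S ∈ P.powerset.erase P, (Q ∪ S) \ Q = S := fun S hS =>
      union_sdiff_cancel_left (hPQ.symm.mono_right (mem_powerset.1 (mem_of_mem_erase hS)))
    rw [← hQS S₁ hS₁, ← hQS S₂ hS₂, geomSum_injective le_rfl h]
  have hcard : #((P.powerset.erase P).image fun S => ∑ i ∈ Q ∪ S, 2 ^ i) = 2 ^ #P - 1 := by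
    rw [card_image_of_injOn hinj, card_erase_of_mem (mem_powerset_self P), card_powerset]
  have hrising := two_mul_card_sub_one_le_card_switchesBelow (f := f) (N := 2 ^ n)
    (U := (P.powerset.erase P).image fun S => ∑ i ∈ Q ∪ S, 2 ^ i) <| by
    simp only [forall_mem_image, mem_erase, mem_powerset]
    intro S ⟨hSP, hSP'⟩
    refine ⟨⟨lt_geomSum_of_mem le_rfl (mem_union_left S hQ), Nat.geomSum_lt le_rfl ?_⟩,
      hf.rising_sum_two_pow_union hPQ hQ (ssubset_of_subset_of_ne hSP' hSP)⟩
    exact fun k hk => mem_range.1 <|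
      hn (union_subset subset_union_right (hSP'.trans subset_union_left) hk)
  have := Nat.one_le_two_pow (n := #P)
  rw [hcard] at hrising
  rw [pow_succ]
  omega

lemma IsOrOfAnds.pow_min_card_succ_sub_three_le (hf : IsOrOfAnds f P Q) (hPQ : Disjoint P Q)
    (h0 : 0 ∈ P ∪ Q) {n : ℕ} (hn : P ∪ Q ⊆ range n) :
    2 ^ (min #P #Q + 1) - 3 ≤ #(switchesBelow f (2 ^ n)) := by
  rcases mem_union.1 h0 with hP | hQ
  · refine le_trans ?_ (hf.symm.pow_card_succ_sub_three_le hPQ.symm hP (union_comm P Q ▸ hn))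
    gcongr <;> omega
  · refine le_trans ?_ (hf.pow_card_succ_sub_three_le hPQ hQ hn)
    gcongr <;> omega

end TwoBlocks

lemma switches_eq_switchesBelow {n : ℕ} (π : Equiv.Perm (Fin n)) (f : (Fin n → Bool) → Bool) :
    switches n π f = switchesBelow (fun b => f (asgOf π b)) (2 ^ n) :=
  rfl

def bitPos {n : ℕ} (π : Equiv.Perm (Fin n)) (x : Fin n) : ℕ := (π.symm x).rev

lemma bitPos_injective {n : ℕ} (π : Equiv.Perm (Fin n)) : Function.Injective (bitPos π) :=
  Fin.val_injective.comp (Fin.rev_injective.comp π.symm.injective)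

lemma asgOf_apply {n : ℕ} (π : Equiv.Perm (Fin n)) (b : ℕ) (x : Fin n) :
    asgOf π b x = b.testBit (bitPos π x) := by
  rw [asgOf, bitPos, Fin.val_rev, Nat.sub_sub, Nat.add_comm 1]

section Halves

variable {n : ℕ} (π : Equiv.Perm (Fin n))

def firstHalfBits : Finset ℕ := (univ.filter fun i : Fin n => (i : ℕ) < n / 2).image (bitPos π)

def secondHalfBits : Finset ℕ := (univ.filter fun i : Fin n => ¬ (i : ℕ) < n / 2).image (bitPos π)

lemma isOrOfAnds_g_asgOf :
    IsOrOfAnds (fun b => g n (asgOf π b)) (firstHalfBits π) (secondHalfBits π) := by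
  intro b
  simp [g, asgOf_apply, firstHalfBits, secondHalfBits]

lemma disjoint_firstHalfBits_secondHalfBits : Disjoint (firstHalfBits π) (secondHalfBits π) :=
  (disjoint_image (bitPos_injective π)).2 (disjoint_filter_filter_not _ _ _)

lemma min_card_firstHalfBits_secondHalfBits :
    min #(firstHalfBits π) #(secondHalfBits π) = n / 2 := by
  have := card_filter_add_card_filter_not (s := univ) fun i : Fin n => (i : ℕ) < n / 2
  rw [firstHalfBits, secondHalfBits, card_image_of_injective _ (bitPos_injective π),
    card_image_of_injective _ (bitPos_injective π)]
  rw [card_univ, Fintype.card_fin, Fin.card_filter_val_lt] at *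
  omega

lemma firstHalfBits_union_secondHalfBits :
    firstHalfBits π ∪ secondHalfBits π = univ.image (bitPos π) := by
  rw [firstHalfBits, secondHalfBits, ← image_union, filter_union_filter_not_eq]

end Halves

theorem g_many_switches_general {n : ℕ} (π : Equiv.Perm (Fin n)) :
    2 ^ (n / 2 + 1) - 3 ≤ (switches n π (g n)).card := by
  rcases n.eq_zero_or_pos with rfl | hn
  · simp
  have h0 : 0 ∈ firstHalfBits π ∪ secondHalfBits π := by
    rw [firstHalfBits_union_secondHalfBits]
    exact mem_image.2 ⟨π (Fin.rev ⟨0, hn⟩), mem_univ _, by simp [bitPos]⟩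
  have hrange : firstHalfBits π ∪ secondHalfBits π ⊆ range n := by
    rw [firstHalfBits_union_secondHalfBits]
    exact image_subset_iff.2 fun x _ => mem_range.2 (Fin.is_lt _)
  rw [switches_eq_switchesBelow, ← min_card_firstHalfBits_secondHalfBits π]
  exact (isOrOfAnds_g_asgOf π).pow_min_card_succ_sub_three_le
    (disjoint_firstHalfBits_secondHalfBits π) h0 hrange

/-- For every variable order `π`, the function
`g = (⋀_{j≤n/2} xⱼ) ∨ (⋀_{j>n/2} xⱼ)` has at least `2^(n/2+1) - 3` switches. -/
theorem g_many_switches {n : ℕ} (hn : Even n) (π : Equiv.Perm (Fin n)) :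
    2 ^ (n / 2 + 1) - 3 ≤ (switches n π (g n)).card :=
  g_many_switches_general π
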